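/- arXiv:0810.4015 — 4 statements merged into one kernel-verified Lean document; each statement's English description precedes it below -/
import Mathlib

section
/- Let l < k with gcd(l,k) = d, k = n d, n > 1, c in GF(2^d), and a in GF(2^k). Then the polynomial F_a(x) = a^{2^l} x^{2^{2l}} + x^{2^l} + a x + c has exactly one zero in GF(2^k) if and only if Z_n(a) != 0; moreover this zero equals c C_n(a)/Z_n(a), and its trace Tr^k_d of it equals n*c (computed in GF(2^d)). -/
/-!
Write `σ` for `x ↦ x ^ 2 ^ l`, which generates `Gal(GF(2^k)/GF(2^d))` and has order `n`, and
`b j = σ^j a`. Then `F_a(x) = L x + c` for the additive, `GF(2^d)`-linear map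
`L = σ(a) σ² + σ + a`, the `C_i(a)` are the continuants of `b`, and `Z_n(a)` is the trace of
the monodromy matrix of `y (m + 2) = y (m + 1) + b m * y m` over one period. Continuant
identities give `L (C_n) = Z_n` and `∑ σ^j (C_n) = n Z_n`, hence the zero `c C_n / Z_n` and its
trace.

As the field is finite, `F_a` has exactly one zero iff `L` is injective. A zero `w` of `L` makes
`x j = σ^j w` an `n`-periodic solution of `b (j+1) x (j+2) = x (j+1) + b j x j`; rescaled by
`∏_{i<j} b i` it becomes an eigenvector, for the eigenvalue `N = ∏_{i<n} b i`, of the monodromy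
with coefficients `b m ^ 2`, whose characteristic polynomial takes the value `N Z_n²` at `N` in
characteristic 2. So `Z_n ≠ 0` forces `w = 0`. Conversely, if `Z_n = 0` such an eigenvector
gives a nonzero periodic solution `x` for the shifted sequence `b (j + 1)`, and then `∑ x j σ^j`
kills the image of `L`; by Artin's independence of characters it is not the zero map, so `L` is
not surjective.
-/

/-- The sequence `C_1 = C_2 = 1`, `C_{i+2}(x) = C_{i+1}(x) + x^(2^(i*l)) * C_i(x)`
(with `C_0 = 0`), evaluated at `u`. -/
def Cseq (l : ℕ) {F : Type*} [Field F] (u : F) : ℕ → F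
  | 0 => 0
  | 1 => 1
  | 2 => 1
  | (i + 3) => Cseq l u (i + 2) + u ^ (2 ^ ((i + 1) * l)) * Cseq l u (i + 1)

/-- `Z_n(x) = C_{n+1}(x) + x * C_{n-1}(x)^(2^l)`, evaluated at `u`. -/
def Zseq (l n : ℕ) {F : Type*} [Field F] (u : F) : F :=
  Cseq l u (n + 1) + u * (Cseq l u (n - 1)) ^ (2 ^ l)

open Finset Function

lemma Function.Periodic.sum_range_add {M : Type*} [AddCancelCommMonoid M] {f : ℕ → M} {n : ℕ}
    (hf : Periodic f n) (t : ℕ) : ∑ j ∈ range n, f (j + t) = ∑ j ∈ range n, f j := by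
  have hshift : ∀ g : ℕ → M, Periodic g n →
      ∑ j ∈ range n, g (j + 1) = ∑ j ∈ range n, g j := by
    intro g hg
    have h := (sum_range_succ' g n).symm.trans (sum_range_succ g n)
    rwa [← zero_add n, hg 0, zero_add, add_left_inj] at h
  induction t with
  | zero => rfl
  | succ t ih =>
    rw [← ih, ← hshift _ (hf.add_const t)]
    simp only [add_right_comm, add_assoc]

lemma sum_range_orderOf_pow_eq {M β : Type*} [Monoid M] [AddCommMonoid β] {σ τ : M}
    (hστ : σ ∈ Submonoid.powers τ) (hord : orderOf σ = orderOf τ) (f : M → β) :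
    ∑ i ∈ range (orderOf σ), f (σ ^ i) = ∑ i ∈ range (orderOf τ), f (τ ^ i) := by
  classical
  rcases eq_or_ne (orderOf τ) 0 with h0 | h0
  · simp [hord, h0]
  have hτ : IsOfFinOrder τ := orderOf_pos_iff.mp (Nat.pos_of_ne_zero h0)
  have hinj : ∀ x : M, Set.InjOn (x ^ ·) ↑(range (orderOf x)) := fun x => by
    rw [coe_range]
    exact pow_injOn_Iio_orderOf
  have himage : (range (orderOf σ)).image (σ ^ ·) = (range (orderOf τ)).image (τ ^ ·) := by
    refine eq_of_subset_of_card_le (fun y hy => ?_) ?_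
    · obtain ⟨i, -, rfl⟩ := mem_image.mp hy
      exact hτ.mem_powers_iff_mem_range_orderOf.mp (pow_mem hστ i)
    · rw [card_image_of_injOn (hinj τ), card_image_of_injOn (hinj σ), card_range, card_range,
        hord]
  rw [← sum_image (hinj σ), ← sum_image (hinj τ), himage]

lemma eq_zero_of_forall_sum_mul_pow_apply_eq_zero {F : Type*} [Field F] {σ : F →+* F}
    {r : ℕ → F} (h : ∀ u, ∑ j ∈ range (orderOf σ), r j * (σ ^ j) u = 0) {j : ℕ}
    (hj : j < orderOf σ) : r j = 0 := by
  have hinj : Injective fun i : Fin (orderOf σ) => ((σ ^ (i : ℕ) : F →+* F) : F →* F) :=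
    fun i i' hii' => Fin.ext <| pow_injOn_Iio_orderOf (Set.mem_Iio.mpr i.2) (Set.mem_Iio.mpr i'.2)
      (RingHom.coe_monoidHom_injective hii')
  refine Fintype.linearIndependent_iff.mp ((linearIndependent_monoidHom F F).comp _ hinj)
    (fun i => r i) ?_ ⟨j, hj⟩
  funext u
  simpa [Fin.sum_univ_eq_sum_range (fun i => r i * (⇑σ)^[i] u)] using h u

lemma AddMonoidHom.existsUnique_add_eq_zero_iff_injective {G : Type*} [AddCommGroup G] [Finite G]
    (f : G →+ G) (c : G) : (∃! v, f v + c = 0) ↔ Injective f := by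
  simp only [add_eq_zero_iff_eq_neg]
  refine ⟨fun ⟨v, hv, huniq⟩ => (injective_iff_map_eq_zero f).mpr fun w hw => ?_,
    fun h => (Finite.injective_iff_bijective.mp h).existsUnique _⟩
  have := huniq (v + w) (show f (v + w) = -c by rw [map_add, hw, add_zero, hv])
  simpa using this

section Continuant

variable {R : Type*} [CommRing R]

def linRec (c : ℕ → R) (u v : R) : ℕ → R
  | 0 => u
  | 1 => v
  | m + 2 => linRec c u v (m + 1) + c m * linRec c u v m

def continuant (b : ℕ → R) (s : ℕ) : ℕ → R :=
  linRec (fun j => b (j + s)) 0 1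

@[simp] lemma linRec_zero (c : ℕ → R) (u v : R) : linRec c u v 0 = u := rfl
@[simp] lemma linRec_one (c : ℕ → R) (u v : R) : linRec c u v 1 = v := rfl
lemma linRec_add_two (c : ℕ → R) (u v : R) (m : ℕ) :
    linRec c u v (m + 2) = linRec c u v (m + 1) + c m * linRec c u v m := rfl

@[simp] lemma continuant_zero (b : ℕ → R) (s : ℕ) : continuant b s 0 = 0 := rfl
@[simp] lemma continuant_one (b : ℕ → R) (s : ℕ) : continuant b s 1 = 1 := rfl
lemma continuant_add_two (b : ℕ → R) (s m : ℕ) :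
    continuant b s (m + 2) = continuant b s (m + 1) + b (m + s) * continuant b s m := rfl
@[simp] lemma continuant_two (b : ℕ → R) (s : ℕ) : continuant b s 2 = 1 := by
  simp [continuant_add_two]

lemma eq_linRec {c : ℕ → R} {y : ℕ → R} (hy : ∀ m, y (m + 2) = y (m + 1) + c m * y m) :
    y = linRec c (y 0) (y 1) := by
  funext m
  induction m using Nat.twoStepInduction with
  | zero => rfl
  | one => rfl
  | more m ih₀ ih₁ => rw [hy, linRec_add_two, ih₀, ih₁]

lemma linRec_succ_eq (c : ℕ → R) (u v : R) (m : ℕ) :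
    linRec c u v (m + 1) = continuant c 0 (m + 1) * v + c 0 * continuant c 1 m * u := by
  induction m using Nat.twoStepInduction with
  | zero => simp
  | one => simp [linRec_add_two]
  | more m ih₀ ih₁ =>
    rw [linRec_add_two, ih₀, ih₁, continuant_add_two c 0 (m + 1), continuant_add_two c 1 m]
    ring

lemma continuant_add_two_left (b : ℕ → R) (m s : ℕ) :
    continuant b s (m + 2) = continuant b (s + 1) (m + 1) + b (s + 1) * continuant b (s + 2) m := by
  induction m using Nat.twoStepInduction generalizing s with
  | zero => simp
  | one => simp [continuant_add_two, add_comm]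
  | more m ih₀ ih₁ =>
    rw [continuant_add_two, ih₀, ih₁, continuant_add_two b (s + 1) (m + 1),
      continuant_add_two b (s + 2) m, show m + 1 + (s + 1) = m + 2 + s by ring,
      show m + (s + 2) = m + 2 + s by ring]
    ring

lemma continuant_shift (b : ℕ → R) (s t : ℕ) :
    continuant (fun j => b (j + t)) s = continuant b (s + t) := by
  simp only [continuant, add_assoc]

lemma continuant_add_period {b : ℕ → R} {n : ℕ} (hb : Periodic b n) (s : ℕ) :
    continuant b (s + n) = continuant b s := by
  rw [← continuant_shift, hb.funext]

lemma linRec_map {S : Type*} [CommRing S] (f : R →+* S) (c : ℕ → R) (u v : R) (m : ℕ) :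
    f (linRec c u v m) = linRec (f ∘ c) (f u) (f v) m := by
  induction m using Nat.twoStepInduction with
  | zero => rfl
  | one => rfl
  | more m ih₀ ih₁ => simp [linRec_add_two, ih₀, ih₁]

lemma continuant_map {S : Type*} [CommRing S] (f : R →+* S) (b : ℕ → R) (s m : ℕ) :
    f (continuant b s m) = continuant (f ∘ b) s m := by
  simp only [continuant, linRec_map, map_zero, map_one]
  rfl

lemma continuant_casoratian (b : ℕ → R) (m : ℕ) :
    continuant b 0 (m + 2) * continuant b 1 m - continuant b 0 (m + 1) * continuant b 1 (m + 1)
      = (-1) ^ (m + 1) * ∏ j ∈ range m, b (j + 1) := by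
  induction m with
  | zero => simp
  | succ m ih =>
    rw [prod_range_succ, continuant_add_two b 0 (m + 1), continuant_add_two b 1 m]
    linear_combination (-b (m + 1)) * ih

end Continuant

section MonodromyTrace

variable {R : Type*} [CommRing R]

def monodromyTrace (b : ℕ → R) (n : ℕ) : R :=
  continuant b 0 (n + 1) + b 0 * continuant b 1 (n - 1)

lemma monodromyTrace_map {S : Type*} [CommRing S] (f : R →+* S) (b : ℕ → R) (n : ℕ) :
    f (monodromyTrace b n) = monodromyTrace (f ∘ b) n := by
  simp [monodromyTrace, continuant_map]

variable {b : ℕ → R} {n : ℕ}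

lemma monodromyTrace_shift_one (hb : Periodic b n) (hn : 2 ≤ n) :
    monodromyTrace (fun j => b (j + 1)) n = monodromyTrace b n := by
  obtain ⟨N, rfl⟩ : ∃ N, n = N + 2 := ⟨n - 2, by omega⟩
  have hbN : b (N + 2) = b 0 := by simpa using hb 0
  simp only [monodromyTrace, continuant_shift, zero_add, show N + 2 - 1 = N + 1 by omega]
  rw [continuant_add_two b 1 (N + 1), continuant_add_two_left b (N + 1) 0,
    show N + 1 + 1 = N + 2 by ring, hbN]
  ring

lemma monodromyTrace_shift (hb : Periodic b n) (hn : 2 ≤ n) (t : ℕ) :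
    monodromyTrace (fun j => b (j + t)) n = monodromyTrace b n := by
  induction t with
  | zero => rfl
  | succ t ih =>
    rw [← ih, ← monodromyTrace_shift_one (hb.add_const t) hn]
    simp only [add_right_comm, add_assoc]

variable [CharP R 2]

lemma continuant_trinomial (hb : Periodic b n) (hn : 2 ≤ n) :
    b 1 * continuant b 2 n + continuant b 1 n + b 0 * continuant b 0 n = monodromyTrace b n := by
  obtain ⟨N, rfl⟩ : ∃ N, n = N + 2 := ⟨n - 2, by omega⟩
  have hbN : b (N + 2) = b 0 := by simpa using hb 0
  simp only [monodromyTrace, show N + 2 - 1 = N + 1 by omega]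
  rw [continuant_add_two b 2 N, continuant_add_two_left b N 0,
    continuant_add_two_left b (N + 1) 0, hbN]
  linear_combination (b 0 * b 1 * continuant b 2 N) * CharTwo.two_eq_zero (R := R)

lemma sum_continuant_eq_nsmul_monodromyTrace (hb : Periodic b n) (hn : 2 ≤ n) :
    ∑ j ∈ range n, continuant b j n = n • monodromyTrace b n := by
  obtain ⟨N, rfl⟩ : ∃ N, n = N + 2 := ⟨n - 2, by omega⟩
  set g : ℕ → R := fun j => b j * continuant b (j + 1) (N + 1)
  have hg : Periodic g (N + 2) := fun j => by
    simp only [g, hb j, show j + (N + 2) + 1 = j + 1 + (N + 2) by ring, continuant_add_period hb]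
  have key : ∀ j, continuant b j (N + 2) = monodromyTrace b (N + 2) + g j + g (j + (N + 1)) := by
    intro j
    have hz : continuant b j (N + 2 + 1) + b j * continuant b (j + 1) (N + 1)
        = monodromyTrace b (N + 2) := by
      rw [← monodromyTrace_shift hb hn j]
      simp only [monodromyTrace, continuant_shift, zero_add, add_comm 1 j,
        show N + 2 - 1 = N + 1 by omega]
    rw [show N + 2 + 1 = N + 1 + 2 from rfl, continuant_add_two, add_comm (N + 1) j] at hz
    simp only [g, show j + (N + 1) + 1 = j + (N + 2) by ring, continuant_add_period hb]
    linear_combination hz - (b (j + (N + 1)) * continuant b j (N + 1)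
      + b j * continuant b (j + 1) (N + 1)) * CharTwo.two_eq_zero (R := R)
  rw [sum_congr rfl fun j _ => key j, sum_add_distrib, sum_add_distrib, hg.sum_range_add,
    add_assoc, CharTwo.add_self_eq_zero, add_zero, sum_const, card_range]

end MonodromyTrace

section Monodromy

open Matrix

variable {R : Type*} [CommRing R] {n : ℕ}

def monodromy (c : ℕ → R) (n : ℕ) : Matrix (Fin 2) (Fin 2) R :=
  !![c 0 * continuant c 1 (n - 1), continuant c 0 n; c 0 * continuant c 1 n, continuant c 0 (n + 1)]

lemma monodromy_mulVec (c : ℕ → R) (hn : n ≠ 0) (u v : R) :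
    monodromy c n *ᵥ ![u, v] = ![linRec c u v n, linRec c u v (n + 1)] := by
  obtain ⟨m, rfl⟩ : ∃ m, n = m + 1 := ⟨n - 1, by omega⟩
  ext i
  fin_cases i <;> simp [monodromy, linRec_succ_eq] <;> ring

lemma det_monodromy_sub (c : ℕ → R) (hn : n ≠ 0) (μ : R) :
    (monodromy c n - μ • 1).det
      = μ ^ 2 - monodromyTrace c n * μ + (-1) ^ n * ∏ i ∈ range n, c i := by
  obtain ⟨m, rfl⟩ : ∃ m, n = m + 1 := ⟨n - 1, by omega⟩
  rw [det_fin_two, monodromy, monodromyTrace, Nat.add_sub_cancel, prod_range_succ']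
  simp only [Matrix.sub_apply, Matrix.smul_apply, of_apply, cons_val', cons_val_zero, cons_val_one,
    cons_val_fin_one, one_apply_eq, one_apply_ne zero_ne_one, one_apply_ne one_ne_zero,
    smul_eq_mul, mul_one, mul_zero, sub_zero]
  linear_combination c 0 * continuant_casoratian c m

theorem exists_linRec_eq_mul_iff [IsDomain R] (c : ℕ → R) (hn : n ≠ 0) (μ : R) :
    (∃ u v : R, (u ≠ 0 ∨ v ≠ 0) ∧ linRec c u v n = μ * u ∧
        linRec c u v (n + 1) = μ * v) ↔
      (monodromy c n - μ • 1).det = 0 := by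
  rw [← Matrix.exists_mulVec_eq_zero_iff]
  have hvec : ∀ u v : R, (monodromy c n - μ • 1) *ᵥ ![u, v]
      = ![linRec c u v n - μ * u, linRec c u v (n + 1) - μ * v] := by
    intro u v
    rw [Matrix.sub_mulVec, monodromy_mulVec c hn]
    ext i
    fin_cases i <;> simp
  constructor
  · rintro ⟨u, v, huv, hu, hv⟩
    refine ⟨![u, v], fun h => ?_, by simp [hvec, hu, hv]⟩
    have h0 : u = 0 := by simpa using congrFun h 0
    have h1 : v = 0 := by simpa using congrFun h 1
    tauto
  · rintro ⟨w, hw, hMw⟩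
    have hw' : w = ![w 0, w 1] := by ext i; fin_cases i <;> rfl
    rw [hw', hvec] at hMw
    refine ⟨w 0, w 1, ?_, ?_, ?_⟩
    · by_contra! h
      exact hw (by rw [hw', h.1, h.2]; simp)
    · simpa [sub_eq_zero] using congrFun hMw 0
    · simpa [sub_eq_zero] using congrFun hMw 1

end Monodromy

section PeriodicSolution

variable {F : Type*} [Field F] [CharP F 2] {b : ℕ → F} {n : ℕ}

lemma det_monodromy_sq_sub_prod (hn : n ≠ 0) :
    (monodromy (fun j => b j ^ 2) n - (∏ i ∈ range n, b i) • 1).det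
      = (∏ i ∈ range n, b i) * monodromyTrace b n ^ 2 := by
  have hsq : monodromyTrace (fun j => b j ^ 2) n = monodromyTrace b n ^ 2 :=
    (monodromyTrace_map (frobenius F 2) b n).symm
  rw [det_monodromy_sub _ hn, hsq, prod_pow, CharTwo.neg_eq, one_pow, one_mul]
  linear_combination ((∏ i ∈ range n, b i) ^ 2
    - (∏ i ∈ range n, b i) * monodromyTrace b n ^ 2) * CharTwo.two_eq_zero (R := F)

variable (hn : n ≠ 0) (hb : Periodic b n) (hb0 : ∀ j, b j ≠ 0)
include hn hb hb0

lemma monodromyTrace_eq_zero_of_periodic_solution {x : ℕ → F} (hx : Periodic x n)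
    (hrec : ∀ j, b (j + 1) * x (j + 2) = x (j + 1) + b j * x j) (hx01 : x 0 ≠ 0 ∨ x 1 ≠ 0) :
    monodromyTrace b n = 0 := by
  have hN : ∏ i ∈ range n, b i ≠ 0 := prod_ne_zero_iff.mpr fun i _ => hb0 i
  have hxn : x n = x 0 := by simpa using hx 0
  have hxn1 : x (n + 1) = x 1 := by simpa [add_comm] using hx 1
  have hbn : b n = b 0 := by simpa using hb 0
  set y : ℕ → F := fun m => (∏ i ∈ range m, b i) * x m
  have hy : ∀ m, y (m + 2) = y (m + 1) + b m ^ 2 * y m := fun m => by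
    simp only [y, prod_range_succ]
    linear_combination (∏ i ∈ range m, b i) * b m * hrec m
  have hyn : linRec (fun j => b j ^ 2) (y 0) (y 1) n = (∏ i ∈ range n, b i) * y 0 := by
    rw [← eq_linRec hy]
    simp [y, hxn]
  have hyn1 : linRec (fun j => b j ^ 2) (y 0) (y 1) (n + 1) = (∏ i ∈ range n, b i) * y 1 := by
    rw [← eq_linRec hy]
    simp only [y, prod_range_succ, hbn, hxn1, range_one, prod_singleton]
    ring
  have hroot := (exists_linRec_eq_mul_iff _ hn _).mp
    ⟨y 0, y 1, by simpa [y, hb0 0] using hx01, hyn, hyn1⟩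
  rw [det_monodromy_sq_sub_prod hn] at hroot
  simpa [hN] using hroot

lemma exists_periodic_solution_of_monodromyTrace_eq_zero (hz : monodromyTrace b n = 0) :
    ∃ x : ℕ → F, Periodic x n ∧ (∀ j, b (j + 1) * x (j + 2) = x (j + 1) + b j * x j) ∧
      (x 0 ≠ 0 ∨ x 1 ≠ 0) := by
  have hN : ∏ i ∈ range n, b i ≠ 0 := prod_ne_zero_iff.mpr fun i _ => hb0 i
  obtain ⟨u, v, huv, hu, hv⟩ := (exists_linRec_eq_mul_iff (fun j => b j ^ 2) hn _).mpr
    (by rw [det_monodromy_sq_sub_prod hn, hz, sq, mul_zero, mul_zero])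
  set y := linRec (fun j => b j ^ 2) u v
  have hyrec : ∀ m, y (m + 2) = y (m + 1) + b m ^ 2 * y m := fun m => rfl
  have hQ : ∀ m, ∏ i ∈ range (m + n), b i
      = (∏ i ∈ range n, b i) * ∏ i ∈ range m, b i := by
    intro m
    rw [add_comm, prod_range_add]
    exact congrArg _ (prod_congr rfl fun i _ => by rw [add_comm, hb])
  have hy : ∀ m, y (m + n) = (∏ i ∈ range n, b i) * y m := by
    intro m
    induction m using Nat.twoStepInduction with
    | zero => rw [zero_add, hu]; rfl
    | one => rw [add_comm, hv]; rfl
    | more m ih₀ ih₁ =>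
      rw [show m + 2 + n = m + n + 2 by ring, hyrec, show m + n + 1 = m + 1 + n by ring,
        ih₀, ih₁, hb m, hyrec]
      ring
  refine ⟨fun m => y m / ∏ i ∈ range m, b i, fun m => ?_, fun j => ?_, ?_⟩
  · simp only [hy, hQ, mul_div_mul_left _ _ hN]
  · have hQj : ∏ i ∈ range j, b i ≠ 0 := prod_ne_zero_iff.mpr fun i _ => hb0 i
    simp only [prod_range_succ, hyrec]
    field_simp [hb0 j, hb0 (j + 1)]
  · simpa [y, hb0 0] using huv

end PeriodicSolution

section Orbit

variable {F : Type*} [Field F] (σ : F →+* F)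

def orbit (a : F) : ℕ → F := fun j => (σ ^ j) a

lemma pow_apply_pow_apply (j t : ℕ) (x : F) : (σ ^ j) ((σ ^ t) x) = (σ ^ (j + t)) x := by
  rw [pow_add]
  rfl

lemma pow_apply_apply (j : ℕ) (x : F) : (σ ^ j) (σ x) = (σ ^ (j + 1)) x := by
  rw [pow_succ]
  rfl

lemma orbit_periodic {n : ℕ} (hσ : σ ^ n = 1) (a : F) : Periodic (orbit σ a) n := fun j => by
  simp only [orbit, pow_add, hσ, mul_one]

lemma orbit_ne_zero {a : F} (ha : a ≠ 0) (j : ℕ) : orbit σ a j ≠ 0 :=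
  (map_ne_zero _).mpr ha

lemma pow_apply_continuant_orbit (a : F) (t s m : ℕ) :
    (σ ^ t) (continuant (orbit σ a) s m) = continuant (orbit σ a) (s + t) m := by
  rw [continuant_map, ← continuant_shift]
  congr 1
  funext j
  simp only [comp_apply, orbit, pow_apply_pow_apply, add_comm t j]

lemma apply_monodromyTrace_orbit {n : ℕ} (hσ : σ ^ n = 1) (hn : 2 ≤ n) (a : F) :
    σ (monodromyTrace (orbit σ a) n) = monodromyTrace (orbit σ a) n := by
  rw [monodromyTrace_map, ← monodromyTrace_shift_one (orbit_periodic σ hσ a) hn]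
  congr 1
  funext j
  show σ ((σ ^ j) a) = (σ ^ (j + 1)) a
  rw [pow_succ']
  rfl

def linearizedTrinomial (a : F) : F →+ F where
  toFun w := σ a * (σ ^ 2) w + σ w + a * w
  map_zero' := by simp
  map_add' x y := by simp only [map_add]; ring

lemma linearizedTrinomial_apply (a w : F) :
    linearizedTrinomial σ a w = σ a * (σ ^ 2) w + σ w + a * w := rfl

lemma pow_apply_linearizedTrinomial (j : ℕ) (a w : F) :
    (σ ^ j) (linearizedTrinomial σ a w)
      = orbit σ a (j + 1) * orbit σ w (j + 2) + orbit σ w (j + 1)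
        + orbit σ a j * orbit σ w j := by
  simp only [linearizedTrinomial_apply, map_add, map_mul, orbit, pow_apply_apply,
    pow_apply_pow_apply]

lemma linearizedTrinomial_mul_of_apply_eq {a e : F} (he : σ e = e) (w : F) :
    linearizedTrinomial σ a (e * w) = e * linearizedTrinomial σ a w := by
  simp only [linearizedTrinomial_apply, map_mul, sq, RingHom.coe_mul, comp_apply, he]
  ring

lemma monodromyTrace_orbit_zero (n : ℕ) : monodromyTrace (orbit σ 0) n = 1 := by
  have hcont : ∀ m, continuant (orbit σ 0) 0 (m + 1) = 1 := fun m => by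
    induction m with
    | zero => rfl
    | succ m ih => simp [continuant_add_two, ih, orbit]
  simp [monodromyTrace, hcont, orbit]

variable [CharP F 2] {n : ℕ}

lemma linearizedTrinomial_continuant (hσ : σ ^ n = 1) (hn : 2 ≤ n) (a : F) :
    linearizedTrinomial σ a (continuant (orbit σ a) 0 n) = monodromyTrace (orbit σ a) n := by
  have h1 := pow_apply_continuant_orbit σ a 1 0 n
  rw [pow_one] at h1
  rw [← continuant_trinomial (orbit_periodic σ hσ a) hn, linearizedTrinomial_apply, h1,
    pow_apply_continuant_orbit]
  simp [orbit]

lemma sum_pow_apply_continuant (hσ : σ ^ n = 1) (hn : 2 ≤ n) (a : F) :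
    ∑ j ∈ range n, (σ ^ j) (continuant (orbit σ a) 0 n)
      = n • monodromyTrace (orbit σ a) n := by
  simp only [pow_apply_continuant_orbit, zero_add]
  exact sum_continuant_eq_nsmul_monodromyTrace (orbit_periodic σ hσ a) hn

lemma injective_linearizedTrinomial (hσ : σ ^ n = 1) (hn : n ≠ 0) {a : F}
    (hz : monodromyTrace (orbit σ a) n ≠ 0) : Injective (linearizedTrinomial σ a) := by
  rw [injective_iff_map_eq_zero]
  intro w hw
  rcases eq_or_ne a 0 with rfl | ha
  · simpa [linearizedTrinomial_apply] using hw
  by_contra hw0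
  refine hz (monodromyTrace_eq_zero_of_periodic_solution hn (orbit_periodic σ hσ a)
    (orbit_ne_zero σ ha) (orbit_periodic σ hσ w) (fun j => ?_)
    (Or.inl (by simpa [orbit] using hw0)))
  have hj := pow_apply_linearizedTrinomial σ j a w
  rw [hw, map_zero] at hj
  linear_combination -hj - (orbit σ w (j + 1) + orbit σ a j * orbit σ w j) *
    CharTwo.two_eq_zero (R := F)

lemma sum_mul_pow_apply_linearizedTrinomial (hσ : σ ^ n = 1) {a : F} {x : ℕ → F}
    (hx : Periodic x n)
    (hrec : ∀ j, orbit σ a (j + 2) * x (j + 2) = x (j + 1) + orbit σ a (j + 1) * x j) (w : F) :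
    ∑ j ∈ range n, x j * (σ ^ j) (linearizedTrinomial σ a w) = 0 := by
  set f := fun j => x j * orbit σ a j * orbit σ w j
  set g := fun j => x j * orbit σ w (j + 1)
  have hf : Periodic f n := (hx.mul (orbit_periodic σ hσ a)).mul (orbit_periodic σ hσ w)
  have hg : Periodic g n := hx.mul ((orbit_periodic σ hσ w).add_const 1)
  have hterm : ∀ j, x j * (σ ^ j) (linearizedTrinomial σ a w)
      = x j * orbit σ a (j + 1) * orbit σ w (j + 2) + g j + f j := fun j => by
    rw [pow_apply_linearizedTrinomial]
    ring
  rw [sum_congr rfl fun j _ => hterm j, sum_add_distrib, sum_add_distrib, ← hg.sum_range_add 1,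
    ← hf.sum_range_add 2, ← sum_add_distrib, ← sum_add_distrib]
  refine sum_eq_zero fun j _ => ?_
  simp only [f, g]
  linear_combination orbit σ w (j + 2) * hrec j + (orbit σ w (j + 2) * x (j + 1)
    + orbit σ a (j + 1) * x j * orbit σ w (j + 2)) * CharTwo.two_eq_zero (R := F)

lemma not_injective_linearizedTrinomial [Finite F] (hσ : orderOf σ = n) (hn : 2 ≤ n) {a : F}
    (hz : monodromyTrace (orbit σ a) n = 0) : ¬ Injective (linearizedTrinomial σ a) := by
  have hσn : σ ^ n = 1 := hσ ▸ pow_orderOf_eq_one σ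
  have ha : a ≠ 0 := by
    rintro rfl
    simp [monodromyTrace_orbit_zero] at hz
  obtain ⟨x, hx, hrec, hx01⟩ := exists_periodic_solution_of_monodromyTrace_eq_zero (by omega)
    ((orbit_periodic σ hσn a).add_const 1) (fun j => orbit_ne_zero σ ha _)
    (by rwa [monodromyTrace_shift_one (orbit_periodic σ hσn a) hn])
  obtain ⟨u, hu⟩ : ∃ u, ∑ j ∈ range n, x j * (σ ^ j) u ≠ 0 := by
    by_contra! h
    rw [← hσ] at h
    rcases hx01 with h0 | h1
    exacts [h0 (eq_zero_of_forall_sum_mul_pow_apply_eq_zero h (by omega)),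
      h1 (eq_zero_of_forall_sum_mul_pow_apply_eq_zero h (by omega))]
  rw [Finite.injective_iff_surjective]
  intro hsurj
  obtain ⟨w, rfl⟩ := hsurj u
  exact hu (sum_mul_pow_apply_linearizedTrinomial σ hσn hx hrec w)

theorem injective_linearizedTrinomial_iff [Finite F] (hσ : orderOf σ = n) (hn : 2 ≤ n) (a : F) :
    Injective (linearizedTrinomial σ a) ↔ monodromyTrace (orbit σ a) n ≠ 0 :=
  ⟨fun h hz => not_injective_linearizedTrinomial σ hσ hn hz h,
    injective_linearizedTrinomial σ (hσ ▸ pow_orderOf_eq_one σ) (by omega)⟩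

lemma linearizedTrinomial_solution (hσ : σ ^ n = 1) (hn : 2 ≤ n) {a c : F}
    (hz : monodromyTrace (orbit σ a) n ≠ 0) (hc : σ c = c) :
    linearizedTrinomial σ a (c * continuant (orbit σ a) 0 n / monodromyTrace (orbit σ a) n)
      + c = 0 := by
  have hfix : σ (c / monodromyTrace (orbit σ a) n) = c / monodromyTrace (orbit σ a) n := by
    rw [map_div₀, hc, apply_monodromyTrace_orbit σ hσ hn]
  rw [mul_div_right_comm, linearizedTrinomial_mul_of_apply_eq σ hfix,
    linearizedTrinomial_continuant σ hσ hn, div_mul_cancel₀ _ hz, CharTwo.add_self_eq_zero]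

lemma sum_pow_apply_solution (hσ : σ ^ n = 1) (hn : 2 ≤ n) {a c : F}
    (hz : monodromyTrace (orbit σ a) n ≠ 0) (hc : σ c = c) :
    ∑ j ∈ range n, (σ ^ j) (c * continuant (orbit σ a) 0 n / monodromyTrace (orbit σ a) n)
      = n • c := by
  have hfix : ∀ j, (σ ^ j) (c / monodromyTrace (orbit σ a) n)
      = c / monodromyTrace (orbit σ a) n := fun j => by
    rw [RingHom.coe_pow]
    exact iterate_fixed (by rw [map_div₀, hc, apply_monodromyTrace_orbit σ hσ hn]) j
  simp only [mul_div_right_comm c, map_mul, hfix, ← mul_sum, sum_pow_apply_continuant σ hσ hn,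
    nsmul_eq_mul]
  field_simp

end Orbit

section Frobenius

variable {F : Type*} [Field F]

lemma frobenius_pow_apply (p : ℕ) [ExpChar F p] (m : ℕ) (x : F) :
    (frobenius F p ^ m) x = x ^ p ^ m := by
  rw [RingHom.coe_pow, iterate_frobenius]

lemma orderOf_frobenius [Fintype F] {p k : ℕ} [Fact p.Prime] [CharP F p]
    (hF : Fintype.card F = p ^ k) : orderOf (frobenius F p) = k := by
  let := ZMod.algebra F p
  have hk : Module.finrank (ZMod p) F = k := by
    have h := Module.card_eq_pow_finrank (K := ZMod p) (V := F)
    rw [ZMod.card, hF] at h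
    exact (Nat.pow_right_injective (Fact.out : p.Prime).two_le h).symm
  rw [← hk, ← FiniteField.orderOf_frobeniusAlgHom (ZMod p) F, orderOf_eq_orderOf_iff]
  intro m
  simp only [DFunLike.ext_iff, frobenius_pow_apply, AlgHom.coe_pow,
    FiniteField.coe_frobeniusAlgHom, ZMod.card, pow_iterate, RingHom.coe_one, AlgHom.one_apply,
    id_eq]

lemma frobenius_pow_apply_eq_self_of_dvd (p : ℕ) [ExpChar F p] {d l : ℕ} (hdl : d ∣ l) {c : F}
    (hc : c ^ p ^ d = c) : (frobenius F p ^ l) c = c := by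
  obtain ⟨q, rfl⟩ := hdl
  rw [pow_mul, RingHom.coe_pow]
  exact iterate_fixed (by rwa [frobenius_pow_apply]) q

lemma linearizedTrinomial_frobenius_pow (p : ℕ) [ExpChar F p] (l : ℕ) (a v : F) :
    linearizedTrinomial (frobenius F p ^ l) a v
      = a ^ p ^ l * v ^ p ^ (2 * l) + v ^ p ^ l + a * v := by
  simp only [linearizedTrinomial_apply, ← pow_mul, frobenius_pow_apply, mul_comm l]

section FiniteField

variable [Fintype F] {p k l d n : ℕ} [Fact p.Prime] [CharP F p] (hF : Fintype.card F = p ^ k)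
  (hl : l ≠ 0) (hd : Nat.gcd l k = d) (hk : k = n * d)
include hF hl hd hk

lemma orderOf_frobenius_pow : orderOf (frobenius F p ^ l) = n := by
  have hd0 : 0 < d := hd ▸ Nat.gcd_pos_of_pos_left k (Nat.pos_of_ne_zero hl)
  rw [orderOf_pow' _ hl, orderOf_frobenius hF, Nat.gcd_comm, hd, hk, Nat.mul_div_cancel _ hd0]

lemma sum_pow_pow_mul_eq_sum_frobenius_pow (x : F) :
    ∑ i ∈ range n, x ^ p ^ (i * d) = ∑ j ∈ range n, ((frobenius F p ^ l) ^ j) x := by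
  have hd0 : d ≠ 0 := hd ▸ (Nat.gcd_pos_of_pos_left k (Nat.pos_of_ne_zero hl)).ne'
  have hdk : Nat.gcd d k = d := Nat.gcd_eq_left (hk ▸ dvd_mul_left d n)
  have hσ : frobenius F p ^ l = (frobenius F p ^ d) ^ (l / d) := by
    rw [← pow_mul, Nat.mul_div_cancel' (hd ▸ Nat.gcd_dvd_left l k)]
  have h := sum_range_orderOf_pow_eq (hσ ▸ pow_mem (Submonoid.mem_powers _) _)
    ((orderOf_frobenius_pow hF hl hd hk).trans (orderOf_frobenius_pow hF hd0 hdk hk).symm)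
    (fun g => g x)
  rw [orderOf_frobenius_pow hF hl hd hk, orderOf_frobenius_pow hF hd0 hdk hk] at h
  rw [h]
  simp only [← pow_mul, frobenius_pow_apply, mul_comm d]

end FiniteField

variable [ExpChar F 2] (l : ℕ) (a : F)

lemma Cseq_eq_continuant (m : ℕ) :
    Cseq l a m = continuant (orbit (frobenius F 2 ^ l) a) 0 m := by
  induction m using Nat.twoStepInduction with
  | zero => rfl
  | one => rfl
  | more m ih₀ ih₁ =>
    rcases m with _ | i
    · simp [Cseq]
    · rw [Cseq, continuant_add_two, ← ih₀, ← ih₁, orbit, ← pow_mul, frobenius_pow_apply,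
        add_zero, mul_comm l]

lemma Zseq_eq_monodromyTrace (n : ℕ) :
    Zseq l n a = monodromyTrace (orbit (frobenius F 2 ^ l) a) n := by
  have h1 := pow_apply_continuant_orbit (frobenius F 2 ^ l) a 1 0 (n - 1)
  rw [pow_one, frobenius_pow_apply] at h1
  simp [Zseq, monodromyTrace, Cseq_eq_continuant, h1, orbit]

end Frobenius

theorem stmt_16_general (k l d n : ℕ) (hd : Nat.gcd l k = d) (hk : k = n * d)
    (hn : 1 < n)
    (F : Type*) [Field F] [Fintype F] (hF : Fintype.card F = 2 ^ k)
    (a : F) (c : F) (hc : c ^ (2 ^ d) = c) :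
    ((∃! v : F, a ^ (2 ^ l) * v ^ (2 ^ (2 * l)) + v ^ (2 ^ l) + a * v + c = 0) ↔
      Zseq l n a ≠ 0) ∧
    (Zseq l n a ≠ 0 →
      (a ^ (2 ^ l) * (c * Cseq l a n / Zseq l n a) ^ (2 ^ (2 * l))
          + (c * Cseq l a n / Zseq l n a) ^ (2 ^ l)
          + a * (c * Cseq l a n / Zseq l n a) + c = 0) ∧
      ∑ i ∈ Finset.range n, (c * Cseq l a n / Zseq l n a) ^ (2 ^ (i * d)) = n • c) := by
  have : Fact (Nat.Prime 2) := ⟨Nat.prime_two⟩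
  have : CharP F 2 := charP_of_card_eq_prime_pow hF
  have hl : l ≠ 0 := by
    rintro rfl
    have hk0 : k ≠ 0 := by
      rintro rfl
      exact (Fintype.one_lt_card (α := F)).ne' (by simpa using hF)
    rw [Nat.gcd_zero_left] at hd
    subst hd
    exact hn.ne' ((Nat.mul_eq_right hk0).mp hk.symm)
  have hσ := orderOf_frobenius_pow hF hl hd hk
  have hσn : (frobenius F 2 ^ l) ^ n = 1 := hσ ▸ pow_orderOf_eq_one _
  have hcσ := frobenius_pow_apply_eq_self_of_dvd 2 (hd ▸ Nat.gcd_dvd_left l k) hc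
  simp only [Cseq_eq_continuant, Zseq_eq_monodromyTrace, ← linearizedTrinomial_frobenius_pow,
    sum_pow_pow_mul_eq_sum_frobenius_pow hF hl hd hk]
  rw [AddMonoidHom.existsUnique_add_eq_zero_iff_injective,
    injective_linearizedTrinomial_iff _ hσ (by omega)]
  exact ⟨Iff.rfl, fun hz => ⟨linearizedTrinomial_solution _ hσn (by omega) hz hcσ,
    sum_pow_apply_solution _ hσn (by omega) hz hcσ⟩⟩

/-- `F_a(x) = a^(2^l) x^(2^(2l)) + x^(2^l) + a x + c` has exactly one
zero in `GF(2^k)` iff `Z_n(a) ≠ 0`; this zero is `c C_n(a)/Z_n(a)` and its relative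
trace to `GF(2^d)` equals `n • c`. -/
theorem stmt_16 (k l d n : ℕ) (hlk : l < k) (hd : Nat.gcd l k = d) (hk : k = n * d)
    (hn : 1 < n)
    (F : Type*) [Field F] [Fintype F] (hF : Fintype.card F = 2 ^ k)
    (a : F) (c : F) (hc : c ^ (2 ^ d) = c) :
    ((∃! v : F, a ^ (2 ^ l) * v ^ (2 ^ (2 * l)) + v ^ (2 ^ l) + a * v + c = 0) ↔
      Zseq l n a ≠ 0) ∧
    (Zseq l n a ≠ 0 →
      (a ^ (2 ^ l) * (c * Cseq l a n / Zseq l n a) ^ (2 ^ (2 * l))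
          + (c * Cseq l a n / Zseq l n a) ^ (2 ^ l)
          + a * (c * Cseq l a n / Zseq l n a) + c = 0) ∧
      ∑ i ∈ Finset.range n, (c * Cseq l a n / Zseq l n a) ^ (2 ^ (i * d)) = n • c) :=
  stmt_16_general k l d n hd hk hn F hF a c hc
end

section
/- Let l < k with gcd(l,k) = d, k = n d, n > 1, c in GF(2^d), and a in GF(2^k). Then the affine polynomial F_a(x) = a^{2^l} x^{2^{2l}} + x^{2^l} + a x + c has at least one zero in GF(2^k). -/
/-!
Let `σ` be the automorphism `x ↦ x ^ 2 ^ l` and `E` its fixed field; `E` contains `c` because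
`d ∣ l`, and the linear part `L x = σ a * σ (σ x) + σ x + a * x` of `F_a` is `E`-linear. For the
trace form of `F/E` one has `Tr (L x * σ y) = Tr (σ x * L y)`, so by nondegeneracy `c` lies in the
range of `L` as soon as `Tr (c * σ θ) = c * Tr θ` vanishes for every `θ ∈ ker L`. For such `θ`,
`σ a * σ (σ θ) = σ θ + a * θ` in characteristic two, whence `Q (g * σ) = Q g + (g (σ θ)) ^ 2` for
`Q g = g (a * θ * σ θ)` and `g ∈ Gal(F/E)`; summing over the group gives `(Tr θ) ^ 2 = 0`.
-/

section Twisted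

variable {E F : Type*} [Field E] [Field F] [Algebra E F] (σ : F ≃ₐ[E] F) (a : F)

def twistedLinearMap : F →ₗ[E] F :=
  LinearMap.mulLeft E (σ a) ∘ₗ σ.toLinearMap ∘ₗ σ.toLinearMap + σ.toLinearMap +
    LinearMap.mulLeft E a

theorem twistedLinearMap_apply (x : F) :
    twistedLinearMap σ a x = σ a * σ (σ x) + σ x + a * x := rfl

theorem trace_twistedLinearMap_mul (x y : F) :
    Algebra.trace E F (twistedLinearMap σ a x * σ y) =
      Algebra.trace E F (σ x * twistedLinearMap σ a y) := by
  have h₁ : σ a * σ (σ x) * σ y = σ (a * σ x * y) := by simp only [map_mul]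
  have h₂ : σ x * (σ a * σ (σ y)) = σ (x * a * σ y) := by rw [map_mul, map_mul, mul_assoc]
  simp only [twistedLinearMap_apply, add_mul, mul_add, map_add, h₁, h₂,
    Algebra.trace_eq_of_algEquiv]
  ring_nf

variable [FiniteDimensional E F] [CharP F 2]

theorem sum_algEquiv_eq_zero_of_twistedLinearMap_eq_zero {θ : F}
    (hθ : twistedLinearMap σ a θ = 0) : ∑ g : Gal(F/E), g θ = 0 := by
  have hσθ : σ a * σ (σ θ) = σ θ + a * θ := by
    rw [twistedLinearMap_apply, add_assoc] at hθ
    rw [← CharTwo.neg_eq (σ θ + a * θ)]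
    exact eq_neg_of_add_eq_zero_left hθ
  have hstep : ∀ g : Gal(F/E),
      (g * σ) (a * θ * σ θ) = g (a * θ * σ θ) + g (σ θ) ^ 2 := by
    intro g
    have : σ (a * θ * σ θ) = σ θ * (σ θ + a * θ) := by
      rw [map_mul, map_mul, ← hσθ]; ring
    rw [AlgEquiv.mul_apply, this]
    simp only [map_mul, map_add]
    ring
  have hsq : (∑ g : Gal(F/E), g (σ θ)) ^ 2 = 0 := by
    have := Equiv.sum_comp (Equiv.mulRight σ) (fun g : Gal(F/E) => g (a * θ * σ θ))
    simp only [Equiv.coe_mulRight, hstep, Finset.sum_add_distrib, add_eq_left] at this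
    rwa [CharTwo.sum_sq]
  rw [← Equiv.sum_comp (Equiv.mulRight σ)]
  exact pow_eq_zero_iff two_ne_zero |>.mp hsq

variable [IsGalois E F]

theorem trace_eq_zero_of_twistedLinearMap_eq_zero {θ : F}
    (hθ : twistedLinearMap σ a θ = 0) : Algebra.trace E F θ = 0 := by
  apply FaithfulSMul.algebraMap_injective E F
  rw [trace_eq_sum_automorphisms, map_zero]
  exact sum_algEquiv_eq_zero_of_twistedLinearMap_eq_zero σ a hθ

theorem algebraMap_mem_range_twistedLinearMap (c : E) :
    algebraMap E F c ∈ LinearMap.range (twistedLinearMap σ a) := by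
  have hnd := traceForm_nondegenerate E F
  rw [← Subspace.forall_mem_dualAnnihilator_apply_eq_zero_iff]
  intro φ hφ
  obtain ⟨w, rfl⟩ := (LinearMap.BilinForm.toDual _ hnd).surjective φ
  obtain ⟨θ, rfl⟩ := σ.surjective w
  simp only [Submodule.mem_dualAnnihilator, LinearMap.mem_range, forall_exists_index,
    forall_apply_eq_imp_iff, LinearMap.BilinForm.toDual_def, Algebra.traceForm_apply] at hφ ⊢
  have hθ : twistedLinearMap σ a θ = 0 := by
    refine hnd.1 _ fun y => ?_
    obtain ⟨x, rfl⟩ := σ.surjective y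
    rw [Algebra.traceForm_apply, mul_comm, ← trace_twistedLinearMap_mul, mul_comm]
    exact hφ x
  rw [mul_comm, ← Algebra.smul_def, map_smul, Algebra.trace_eq_of_algEquiv,
    trace_eq_zero_of_twistedLinearMap_eq_zero σ a hθ, smul_zero]

end Twisted

theorem pow_pow_eq_self_of_dvd {M : Type*} [Monoid M] {p d l : ℕ} (hdl : d ∣ l) {c : M}
    (hc : c ^ p ^ d = c) : c ^ p ^ l = c := by
  obtain ⟨m, rfl⟩ := hdl
  induction m with
  | zero => simp
  | succ m ih => rw [Nat.mul_succ, pow_add, pow_mul, ih, hc]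

theorem stmt_17_general (k l d : ℕ) (hd : Nat.gcd l k = d)
    (F : Type*) [Field F] [Fintype F] (hF : Fintype.card F = 2 ^ k)
    (a : F) (c : F) (hc : c ^ (2 ^ d) = c) :
    ∃ v : F, a ^ (2 ^ l) * v ^ (2 ^ (2 * l)) + v ^ (2 ^ l) + a * v + c = 0 := by
  have : Fact (Nat.Prime 2) := ⟨Nat.prime_two⟩
  have : CharP F 2 := charP_of_card_eq_prime_pow hF
  let E : Subfield F := (iterateFrobenius F 2 l).eqLocusField (RingHom.id F)
  let σ : F ≃ₐ[E] F := AlgEquiv.ofRingEquiv (f := iterateFrobeniusEquiv F 2 l) fun x => x.2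
  have hσ : ∀ x, σ x = x ^ 2 ^ l := fun _ => rfl
  have hcE : c ∈ E := pow_pow_eq_self_of_dvd (hd ▸ Nat.gcd_dvd_left l k) hc
  obtain ⟨v, hv⟩ := algebraMap_mem_range_twistedLinearMap σ a ⟨c, hcE⟩
  refine ⟨v, ?_⟩
  rw [twistedLinearMap_apply, hσ, hσ, hσ, ← pow_mul, ← pow_add, ← two_mul] at hv
  rw [hv]
  exact CharTwo.add_self_eq_zero c

/-- the affine polynomial
`F_a(x) = a^(2^l) x^(2^(2l)) + x^(2^l) + a x + c` with `c ∈ GF(2^d)` always has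
at least one zero in `GF(2^k)`. -/
theorem stmt_17 (k l d n : ℕ) (hlk : l < k) (hd : Nat.gcd l k = d) (hk : k = n * d)
    (hn : 1 < n)
    (F : Type*) [Field F] [Fintype F] (hF : Fintype.card F = 2 ^ k)
    (a : F) (c : F) (hc : c ^ (2 ^ d) = c) :
    ∃ v : F, a ^ (2 ^ l) * v ^ (2 ^ (2 * l)) + v ^ (2 ^ l) + a * v + c = 0 :=
  stmt_17_general k l d hd F hF a c hc
end

section
/- Let k, l be positive integers with l < k, d = gcd(l,k), and let r in GF(2^{2k})* satisfy r^{2^k+1} = 1. If (k+l)/d is odd, or if (k+l)/d is even and r^{(2^k+1)/(2^d+1)} = 1, then r is a (2^{k+l}-1)-th power in GF(2^{2k}); if (k+l)/d is even and r^{(2^k+1)/(2^d+1)} != 1, then r is not a (2^{k+l}-1)-th power in GF(2^{2k}). -/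
/-!
Write `N = 2^(2k) - 1 = (2^k - 1)(2^k + 1)` and `d = gcd(l, k)`. Since the unit group of the field
is cyclic of order `N`, `r` is an `m`-th power iff `r ^ (N / gcd(N, m)) = 1`, and for
`m = 2^(k+l) - 1` we have `gcd(N, m) = 2^e - 1` with `e = gcd(2k, k+l)`, which is `d` or `2d`
according as `(k+l)/d` is odd or even. If `e = d` then `2^k + 1` divides `N / (2^d - 1)`, so every
`r` with `r^(2^k+1) = 1` qualifies. If `e = 2d` then `k/d` is odd and
`N / (2^(2d) - 1) = (2^k - 1)/(2^d - 1) · (2^k + 1)/(2^d + 1)`; the first factor is prime to the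
order of `r`, leaving the condition `r^((2^k+1)/(2^d+1)) = 1`.
-/

theorem IsCyclic.mem_range_powMonoidHom_iff {G : Type*} [CommGroup G] [IsCyclic G] [Finite G]
    (m : ℕ) (x : G) :
    x ∈ (powMonoidHom m : G →* G).range ↔ x ^ (Nat.card G / (Nat.card G).gcd m) = 1 := by
  set n := Nat.card G / (Nat.card G).gcd m
  have hn : n ∣ Nat.card G := Nat.div_dvd_of_dvd (Nat.gcd_dvd_left _ _)
  suffices (powMonoidHom m : G →* G).range = (powMonoidHom n).ker by
    rw [this, MonoidHom.mem_ker, powMonoidHom_apply]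
  refine Subgroup.eq_of_le_of_card_ge ?_ ?_
  · rintro _ ⟨y, rfl⟩
    have hmn : m * n = Nat.card G * (m / (Nat.card G).gcd m) := by
      rw [← Nat.mul_div_assoc _ (Nat.gcd_dvd_left _ _),
        ← Nat.mul_div_assoc _ (Nat.gcd_dvd_right _ _), mul_comm]
    rw [MonoidHom.mem_ker, powMonoidHom_apply, powMonoidHom_apply, ← pow_mul, hmn, pow_mul,
      pow_card_eq_one', one_pow]
  · rw [IsCyclic.card_powMonoidHom_ker, IsCyclic.card_powMonoidHom_range, Nat.gcd_eq_right hn]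

theorem FiniteField.exists_pow_eq_iff {K : Type*} [Field K] [Fintype K] {m : ℕ} (hm : m ≠ 0)
    {r : K} (hr : r ≠ 0) :
    (∃ s : K, s ^ m = r) ↔
      r ^ ((Fintype.card K - 1) / (Fintype.card K - 1).gcd m) = 1 := by
  lift r to Kˣ using hr.isUnit
  rw [← Nat.card_eq_fintype_card, ← Nat.card_units, ← Units.val_pow_eq_pow_val,
    Units.val_eq_one, ← IsCyclic.mem_range_powMonoidHom_iff]
  constructor
  · rintro ⟨s, hs⟩
    have hs0 : s ≠ 0 := by rintro rfl; exact r.ne_zero (by rw [← hs, zero_pow hm])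
    exact ⟨Units.mk0 s hs0, Units.ext hs⟩
  · rintro ⟨s, rfl⟩
    exact ⟨s, rfl⟩

theorem pow_mul_eq_one_iff_of_coprime {M : Type*} [CommMonoid M] {a : M} {m n : ℕ} (c : ℕ)
    (ha : a ^ n = 1) (hmn : m.Coprime n) : a ^ (m * c) = 1 ↔ a ^ c = 1 := by
  refine ⟨fun h => ?_, fun h => by rw [pow_mul', h, one_pow]⟩
  refine (pow_eq_one_iff_of_coprime hmn).mp ⟨by rwa [← pow_mul'], ?_⟩
  rw [← pow_mul', pow_mul, ha, one_pow]

theorem Nat.pow_two_mul_sub_one (x n : ℕ) : x ^ (2 * n) - 1 = (x ^ n - 1) * (x ^ n + 1) := by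
  rw [pow_mul', ← one_pow 2, Nat.sq_sub_sq, one_pow, mul_comm]

theorem Nat.pow_add_one_dvd_pow_add_one (x : ℕ) {d k : ℕ} (hdk : d ∣ k) (hodd : Odd (k / d)) :
    x ^ d + 1 ∣ x ^ k + 1 := by
  simpa [← pow_mul, Nat.mul_div_cancel' hdk] using hodd.nat_add_dvd_pow_add_pow (x ^ d) 1

theorem Nat.two_pow_sub_one_coprime_two_pow_add_one {n : ℕ} (hn : n ≠ 0) :
    (2 ^ n - 1).Coprime (2 ^ n + 1) := by
  have hpos : 1 ≤ 2 ^ n := Nat.one_le_two_pow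
  rw [show 2 ^ n + 1 = 2 + (2 ^ n - 1) by omega, Nat.coprime_add_self_right, Nat.coprime_two_right]
  exact Nat.Even.sub_odd hpos (Nat.even_pow.mpr ⟨even_two, hn⟩) odd_one

theorem Nat.gcd_add_two_mul (k l : ℕ) :
    (k + l).gcd (2 * k) = l.gcd k * ((k + l) / l.gcd k).gcd 2 := by
  obtain ⟨l', k', hcop, hl, hk⟩ := Nat.exists_coprime l k
  rcases Nat.eq_zero_or_pos (l.gcd k) with h0 | hpos
  · simp [Nat.gcd_eq_zero_iff.mp h0]
  set d := l.gcd k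
  have hkl : k + l = d * (k' + l') := by rw [hk, hl]; ring
  rw [hkl, Nat.mul_div_cancel_left _ hpos, hk, show 2 * (k' * d) = d * (2 * k') by ring,
    Nat.gcd_mul_left,
    Nat.Coprime.gcd_mul_right_cancel_right _ (Nat.coprime_self_add_right.mpr hcop.symm)]

theorem Nat.odd_div_gcd_of_even {k l : ℕ} (hk : k ≠ 0) (heven : Even ((k + l) / l.gcd k)) :
    Odd (k / l.gcd k) := by
  have hpos : 0 < l.gcd k := Nat.gcd_pos_of_pos_right _ (Nat.pos_of_ne_zero hk)
  obtain ⟨l', k', hcop, hl, hk'⟩ := Nat.exists_coprime l k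
  set d := l.gcd k
  rw [hk', Nat.mul_div_cancel _ hpos]
  rw [hk', hl, ← add_mul, Nat.mul_div_cancel _ hpos] at heven
  by_contra hk'odd
  rw [Nat.not_odd_iff_even] at hk'odd
  have hl'even : Even l' := (Nat.even_add.mp heven).mp hk'odd
  exact Nat.not_coprime_of_dvd_of_dvd one_lt_two hl'even.two_dvd hk'odd.two_dvd hcop

theorem exists_pow_two_pow_sub_one_eq_iff {E : Type*} [Field E] [Fintype E] {k : ℕ}
    (hE : Fintype.card E = 2 ^ (2 * k)) (hk : k ≠ 0) (l : ℕ) {r : E} (hr0 : r ≠ 0) :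
    (∃ s : E, s ^ (2 ^ (k + l) - 1) = r) ↔
      r ^ ((2 ^ (2 * k) - 1) / (2 ^ (l.gcd k * ((k + l) / l.gcd k).gcd 2) - 1)) = 1 := by
  have hm : 2 ^ (k + l) - 1 ≠ 0 := by
    have := Nat.one_lt_two_pow (n := k + l) (by omega)
    omega
  rw [FiniteField.exists_pow_eq_iff hm hr0, hE, Nat.pow_sub_one_gcd_pow_sub_one, Nat.gcd_comm,
    Nat.gcd_add_two_mul]

theorem exists_pow_two_pow_sub_one_eq_of_odd {E : Type*} [Field E] [Fintype E] {k : ℕ}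
    (hE : Fintype.card E = 2 ^ (2 * k)) (hk : k ≠ 0) (l : ℕ) {r : E} (hr0 : r ≠ 0)
    (hr : r ^ (2 ^ k + 1) = 1) (hodd : Odd ((k + l) / l.gcd k)) :
    ∃ s : E, s ^ (2 ^ (k + l) - 1) = r := by
  have hA : 2 ^ l.gcd k - 1 ∣ 2 ^ k - 1 :=
    Nat.pow_sub_one_dvd_pow_sub_one 2 (Nat.gcd_dvd_right l k)
  rw [exists_pow_two_pow_sub_one_eq_iff hE hk l hr0, (Nat.coprime_two_right.mpr hodd).gcd_eq_one,
    mul_one, Nat.pow_two_mul_sub_one, ← Nat.div_mul_right_comm hA, pow_mul', hr, one_pow]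

theorem exists_pow_two_pow_sub_one_eq_iff_of_even {E : Type*} [Field E] [Fintype E] {k : ℕ}
    (hE : Fintype.card E = 2 ^ (2 * k)) (hk : k ≠ 0) (l : ℕ) {r : E} (hr0 : r ≠ 0)
    (hr : r ^ (2 ^ k + 1) = 1) (heven : Even ((k + l) / l.gcd k)) :
    (∃ s : E, s ^ (2 ^ (k + l) - 1) = r) ↔ r ^ ((2 ^ k + 1) / (2 ^ l.gcd k + 1)) = 1 := by
  have hA : 2 ^ l.gcd k - 1 ∣ 2 ^ k - 1 :=
    Nat.pow_sub_one_dvd_pow_sub_one 2 (Nat.gcd_dvd_right l k)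
  have hB : 2 ^ l.gcd k + 1 ∣ 2 ^ k + 1 :=
    Nat.pow_add_one_dvd_pow_add_one 2 (Nat.gcd_dvd_right l k) (Nat.odd_div_gcd_of_even hk heven)
  have hAcop : ((2 ^ k - 1) / (2 ^ l.gcd k - 1)).Coprime (2 ^ k + 1) :=
    (Nat.two_pow_sub_one_coprime_two_pow_add_one hk).coprime_dvd_left (Nat.div_dvd_of_dvd hA)
  rw [exists_pow_two_pow_sub_one_eq_iff hE hk l hr0, Nat.gcd_eq_right heven.two_dvd,
    mul_comm (l.gcd k), Nat.pow_two_mul_sub_one, Nat.pow_two_mul_sub_one,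
    ← Nat.div_mul_div_comm hA hB, pow_mul_eq_one_iff_of_coprime _ hr hAcop]

theorem stmt_18_general (k l d : ℕ) (hk : 0 < k) (hd : Nat.gcd l k = d)
    (E : Type*) [Field E] [Fintype E] (hE : Fintype.card E = 2 ^ (2 * k))
    (r : E) (hr0 : r ≠ 0) (hr : r ^ (2 ^ k + 1) = 1) :
    ((Odd ((k + l) / d) ∨ (Even ((k + l) / d) ∧ r ^ ((2 ^ k + 1) / (2 ^ d + 1)) = 1)) →
      ∃ s : E, s ^ (2 ^ (k + l) - 1) = r) ∧
    ((Even ((k + l) / d) ∧ r ^ ((2 ^ k + 1) / (2 ^ d + 1)) ≠ 1) →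
      ¬∃ s : E, s ^ (2 ^ (k + l) - 1) = r) := by
  subst hd
  have hcrit_even := exists_pow_two_pow_sub_one_eq_iff_of_even hE hk.ne' l hr0 hr
  refine ⟨?_, fun ⟨heven, hne⟩ => (hcrit_even heven).not.mpr hne⟩
  rintro (hodd | ⟨heven, hr1⟩)
  · exact exists_pow_two_pow_sub_one_eq_of_odd hE hk.ne' l hr0 hr hodd
  · exact (hcrit_even heven).mpr hr1

/-- for `r ∈ GF(2^(2k))*` with `r^(2^k+1) = 1`, `r` is a
`(2^(k+l)-1)`-th power in `GF(2^(2k))` except precisely when `(k+l)/d` is even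
and `r^((2^k+1)/(2^d+1)) ≠ 1`, where `d = gcd(l,k)`. -/
theorem stmt_18 (k l d : ℕ) (hk : 0 < k) (hl : 0 < l) (hlk : l < k) (hd : Nat.gcd l k = d)
    (E : Type*) [Field E] [Fintype E] (hE : Fintype.card E = 2 ^ (2 * k))
    (r : E) (hr0 : r ≠ 0) (hr : r ^ (2 ^ k + 1) = 1) :
    ((Odd ((k + l) / d) ∨ (Even ((k + l) / d) ∧ r ^ ((2 ^ k + 1) / (2 ^ d + 1)) = 1)) →
      ∃ s : E, s ^ (2 ^ (k + l) - 1) = r) ∧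
    ((Even ((k + l) / d) ∧ r ^ ((2 ^ k + 1) / (2 ^ d + 1)) ≠ 1) →
      ¬∃ s : E, s ^ (2 ^ (k + l) - 1) = r) :=
  stmt_18_general k l d hk hd E hE r hr0 hr
end

section
/- Let l < k with gcd(l,k) = 1, a in GF(2^k)*, and let q(x) = (sum_{i=1}^{l'} x^{2^{il}} + epsilon)/x^{2^l+1} with epsilon = l'+1 mod 2 and l' = l^{-1} mod k, which is a permutation of GF(2^k)*. Let V in GF(2^k)* be the unique solution of a x^{2^l+1} = sum_{i=1}^{l'} x^{2^{il}} + l' + 1. Then a^{2^l} V^{2^{2l}} + V^{2^l} + a V + 1 = 0. -/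
/-!
Write `w = V^(2^l)` and `S = ∑_{i=1}^{l'} V^(2^(il))`. Raising `a V w = S + (l' + 1)` to the power
`2^l` shifts the sum by one index, and since `x ↦ x^(2^m)` only depends on `m mod k` while
`(l' + 1) l ≡ l + 1 (mod k)`, the new last term is `w^2`. Subtracting the two equations leaves
`w (a^(2^l) V^(2^(2l)) + w + a V + 1) = 0` in characteristic two, and `w ≠ 0`.
-/

open Finset

theorem FiniteField.charP_of_card_eq_prime_pow {F : Type*} [Field F] [Fintype F] {p k : ℕ}
    [hp : Fact p.Prime] (hF : Fintype.card F = p ^ k) : CharP F p := by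
  have hchar : (ringChar F).Prime := CharP.char_is_prime F _
  have hdvd : ringChar F ∣ p ^ k := by
    rw [← hF, ← CharP.cast_eq_zero_iff F]
    exact FiniteField.cast_card_eq_zero F
  exact ringChar.of_eq <|
    (Nat.prime_dvd_prime_iff_eq hchar hp.out).mp (hchar.dvd_of_dvd_pow hdvd)

theorem FiniteField.pow_pow_eq_of_modEq {F : Type*} [Field F] [Fintype F] {p k m n : ℕ}
    (hF : Fintype.card F = p ^ k) (h : m ≡ n [MOD k]) (x : F) : x ^ p ^ m = x ^ p ^ n := by
  have hmod : ∀ j, x ^ p ^ j = x ^ p ^ (j % k) := fun j => by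
    conv_lhs => rw [← Nat.mod_add_div j k, pow_add, pow_mul, pow_mul, ← hF,
      FiniteField.pow_card_pow]
  rw [hmod m, hmod n, h]

theorem sum_pow_pow_mul_pow_sub_self {R : Type*} [CommRing R] {p : ℕ} [ExpChar R p]
    (x : R) (l n : ℕ) :
    (∑ i ∈ Icc 1 n, x ^ p ^ (i * l)) ^ p ^ l - ∑ i ∈ Icc 1 n, x ^ p ^ (i * l) =
      x ^ p ^ ((n + 1) * l) - x ^ p ^ l := by
  have htel := sum_Ico_sub (fun i => x ^ p ^ (i * l)) (show 1 ≤ n + 1 by omega)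
  rw [Ico_add_one_right_eq_Icc, one_mul] at htel
  rw [sum_pow_char_pow, ← sum_sub_distrib, ← htel]
  refine sum_congr rfl fun i _ => ?_
  rw [← pow_mul, ← pow_add, add_mul, one_mul]

theorem stmt_19_general (k l l' : ℕ)
    (hl' : l * l' ≡ 1 [MOD k])
    (F : Type*) [Field F] [Fintype F] (hF : Fintype.card F = 2 ^ k)
    (a : F) (V : F) (hV0 : V ≠ 0)
    (hV : a * V ^ (2 ^ l + 1) =
      (∑ i ∈ Finset.Icc 1 l', V ^ (2 ^ (i * l))) + ((l' : F) + 1)) :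
    a ^ (2 ^ l) * V ^ (2 ^ (2 * l)) + V ^ (2 ^ l) + a * V + 1 = 0 := by
  have : Fact (Nat.Prime 2) := ⟨Nat.prime_two⟩
  have : CharP F 2 := FiniteField.charP_of_card_eq_prime_pow hF
  have hshift : (l' + 1) * l ≡ l + 1 [MOD k] := by
    rw [add_mul, one_mul, mul_comm, add_comm l]
    exact hl'.add_right l
  have hS := sum_pow_pow_mul_pow_sub_self (p := 2) V l l'
  rw [FiniteField.pow_pow_eq_of_modEq hF hshift, pow_succ, pow_mul] at hS
  have hfrob := congrArg (iterateFrobenius F 2 l) hV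
  simp only [map_mul, map_add, map_pow, map_natCast, map_one, iterateFrobenius_def] at hfrob
  have hw : (V ^ 2 ^ l) ^ 2 ^ l = V ^ 2 ^ (2 * l) := by rw [← pow_mul, ← pow_add, two_mul]
  rw [pow_succ, hw] at hfrob
  have hfactor : V ^ 2 ^ l * (a ^ (2 ^ l) * V ^ (2 ^ (2 * l)) + V ^ (2 ^ l) + a * V + 1) = 0 := by
    linear_combination hfrob - hV + hS + (a * V + V ^ 2 ^ l) * V ^ 2 ^ l * CharTwo.two_eq_zero (R := F)
  exact (mul_eq_zero.mp hfactor).resolve_left (pow_ne_zero _ hV0)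

/-- if `V` is the (unique) nonzero solution of
`a x^(2^l+1) = ∑_{i=1}^{l'} x^(2^(il)) + l' + 1`, then
`a^(2^l) V^(2^(2l)) + V^(2^l) + a V + 1 = 0`. -/
theorem stmt_19 (k l l' : ℕ) (hk : 0 < k) (hlk : l < k) (hgcd : Nat.gcd l k = 1)
    (hl' : l * l' ≡ 1 [MOD k])
    (F : Type*) [Field F] [Fintype F] (hF : Fintype.card F = 2 ^ k)
    (a : F) (ha : a ≠ 0) (V : F) (hV0 : V ≠ 0)
    (hV : a * V ^ (2 ^ l + 1) =
      (∑ i ∈ Finset.Icc 1 l', V ^ (2 ^ (i * l))) + ((l' : F) + 1)) :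
    a ^ (2 ^ l) * V ^ (2 ^ (2 * l)) + V ^ (2 ^ l) + a * V + 1 = 0 :=
  stmt_19_general k l l' hl' F hF a V hV0 hV
end
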